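/- arXiv:0903.0530 — 8 statements merged into one kernel-verified Lean document; each statement's English description precedes it below -/
import Mathlib

section
/- Let a_1,...,a_n and b_1,...,b_n be positive integers such that gcd(a_i, a_j) = gcd(b_i, b_j) for all 1 ≤ i < j ≤ n. Then (a_1·a_2···a_n)/lcm(a_1,...,a_n) = (b_1·b_2···b_n)/lcm(b_1,...,b_n). -/
open Finset

lemma key_lemma {n : ℕ} (v w : Fin n → ℕ)
    (h : ∀ i j, i ≠ j → min (v i) (v j) = min (w i) (w j)) :
    (∑ i, v i) + Finset.univ.sup w = (∑ i, w i) + Finset.univ.sup v := by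
  rcases Nat.eq_zero_or_pos n with hn | hn
  · subst hn; simp
  have hne : (Finset.univ : Finset (Fin n)).Nonempty := ⟨⟨0, hn⟩, Finset.mem_univ _⟩
  obtain ⟨i0, -, hi0⟩ := Finset.exists_mem_eq_sup Finset.univ hne v
  obtain ⟨i1, -, hi1⟩ := Finset.exists_mem_eq_sup Finset.univ hne w
  have hvle : ∀ j, v j ≤ v i0 := fun j => hi0 ▸ Finset.le_sup (Finset.mem_univ j)
  have hwle : ∀ j, w j ≤ w i1 := fun j => hi1 ▸ Finset.le_sup (Finset.mem_univ j)
  by_cases hcase : i0 = i1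
  · subst hcase
    have hvw : ∀ j, j ≠ i0 → v j = w j := by
      intro j hj
      have := h j i0 hj
      rwa [min_eq_left (hvle j), min_eq_left (hwle j)] at this
    have e1 : v i0 + ∑ i ∈ Finset.univ.erase i0, v i = ∑ i, v i :=
      Finset.add_sum_erase _ v (Finset.mem_univ i0)
    have e2 : w i0 + ∑ i ∈ Finset.univ.erase i0, w i = ∑ i, w i :=
      Finset.add_sum_erase _ w (Finset.mem_univ i0)
    have e3 : ∑ i ∈ Finset.univ.erase i0, v i = ∑ i ∈ Finset.univ.erase i0, w i :=
      Finset.sum_congr rfl (fun j hj => hvw j (Finset.ne_of_mem_erase hj))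
    omega
  · have hvw : ∀ j, j ≠ i0 → j ≠ i1 → v j = w j := by
      intro j hj0 hj1
      have h1 := h j i0 hj0
      rw [min_eq_left (hvle j)] at h1
      have h2 := h j i1 hj1
      rw [min_eq_left (hwle j)] at h2
      have : v j ≤ w j := h1 ▸ min_le_left _ _
      have : w j ≤ v j := h2.symm ▸ min_le_left _ _
      omega
    have hx : v i1 = w i0 := by
      have := h i0 i1 hcase
      rwa [min_eq_right (hvle i1), min_eq_left (hwle i0)] at this
    have hm1 : i1 ∈ Finset.univ.erase i0 :=
      Finset.mem_erase.mpr ⟨fun he => hcase he.symm, Finset.mem_univ _⟩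
    have e1 : v i0 + ∑ i ∈ Finset.univ.erase i0, v i = ∑ i, v i :=
      Finset.add_sum_erase _ v (Finset.mem_univ i0)
    have e2 : w i0 + ∑ i ∈ Finset.univ.erase i0, w i = ∑ i, w i :=
      Finset.add_sum_erase _ w (Finset.mem_univ i0)
    have e1' : v i1 + ∑ i ∈ (Finset.univ.erase i0).erase i1, v i
        = ∑ i ∈ Finset.univ.erase i0, v i := Finset.add_sum_erase _ v hm1
    have e2' : w i1 + ∑ i ∈ (Finset.univ.erase i0).erase i1, w i
        = ∑ i ∈ Finset.univ.erase i0, w i := Finset.add_sum_erase _ w hm1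
    have e3 : ∑ i ∈ (Finset.univ.erase i0).erase i1, v i
        = ∑ i ∈ (Finset.univ.erase i0).erase i1, w i := by
      refine Finset.sum_congr rfl (fun j hj => ?_)
      have hj1 := Finset.ne_of_mem_erase hj
      have hj0 := Finset.ne_of_mem_erase (Finset.mem_of_mem_erase hj)
      exact hvw j hj0 hj1
    omega

lemma finset_lcm_ne_zero {ι : Type*} (s : Finset ι) (f : ι → ℕ)
    (hf : ∀ i ∈ s, f i ≠ 0) : s.lcm f ≠ 0 := by
  classical
  induction s using Finset.induction with
  | empty => simp [Finset.lcm_empty]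
  | @insert a s _ ih =>
    rw [Finset.lcm_insert]
    exact Nat.lcm_ne_zero (hf a (Finset.mem_insert_self a s))
      (ih fun i hi => hf i (Finset.mem_insert_of_mem hi))

lemma factorization_finset_lcm {ι : Type*} (s : Finset ι) (f : ι → ℕ)
    (hf : ∀ i ∈ s, f i ≠ 0) (p : ℕ) :
    (s.lcm f).factorization p = s.sup (fun i => (f i).factorization p) := by
  classical
  induction s using Finset.induction with
  | empty => simp
  | @insert a s _ ih =>
    have hfa := hf a (Finset.mem_insert_self a s)
    have hfs : ∀ i ∈ s, f i ≠ 0 := fun i hi => hf i (Finset.mem_insert_of_mem hi)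
    rw [Finset.lcm_insert, Finset.sup_insert, ← ih hfs]
    rw [lcm_eq_nat_lcm,
      Nat.factorization_lcm hfa (finset_lcm_ne_zero s f hfs), Finsupp.sup_apply]

theorem stmt1 (n : ℕ) (a b : Fin n → ℕ) (ha : ∀ i, 0 < a i) (hb : ∀ i, 0 < b i)
    (h : ∀ i j : Fin n, i < j → Nat.gcd (a i) (a j) = Nat.gcd (b i) (b j)) :
    (∏ i, (a i : ℚ)) / ((Finset.univ.lcm a : ℕ) : ℚ) =
      (∏ i, (b i : ℚ)) / ((Finset.univ.lcm b : ℕ) : ℚ) := by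
  have ha' : ∀ i, a i ≠ 0 := fun i => (ha i).ne'
  have hb' : ∀ i, b i ≠ 0 := fun i => (hb i).ne'
  have hLa : Finset.univ.lcm a ≠ 0 := finset_lcm_ne_zero _ a (fun i _ => ha' i)
  have hLb : Finset.univ.lcm b ≠ 0 := finset_lcm_ne_zero _ b (fun i _ => hb' i)
  have hPa : (∏ i, a i) ≠ 0 := Finset.prod_ne_zero_iff.mpr (fun i _ => ha' i)
  have hPb : (∏ i, b i) ≠ 0 := Finset.prod_ne_zero_iff.mpr (fun i _ => hb' i)
  have key : (∏ i, a i) * Finset.univ.lcm b = (∏ i, b i) * Finset.univ.lcm a := by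
    apply Nat.eq_of_factorization_eq (mul_ne_zero hPa hLb) (mul_ne_zero hPb hLa)
    intro p
    rw [Nat.factorization_mul hPa hLb, Nat.factorization_mul hPb hLa]
    simp only [Finsupp.add_apply]
    rw [Nat.factorization_prod (fun i _ => ha' i), Nat.factorization_prod (fun i _ => hb' i)]
    simp only [Finset.sum_apply']
    rw [factorization_finset_lcm _ a (fun i _ => ha' i) p,
      factorization_finset_lcm _ b (fun i _ => hb' i) p]
    apply key_lemma
    intro i j hij
    have hgcd : Nat.gcd (a i) (a j) = Nat.gcd (b i) (b j) := by
      rcases lt_or_gt_of_ne hij with hlt | hgt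
      · exact h i j hlt
      · rw [Nat.gcd_comm (a i), Nat.gcd_comm (b i)]; exact h j i hgt
    have h1 : (Nat.gcd (a i) (a j)).factorization p
        = min ((a i).factorization p) ((a j).factorization p) := by
      rw [Nat.factorization_gcd (ha' i) (ha' j), Finsupp.inf_apply]
    have h2 : (Nat.gcd (b i) (b j)).factorization p
        = min ((b i).factorization p) ((b j).factorization p) := by
      rw [Nat.factorization_gcd (hb' i) (hb' j), Finsupp.inf_apply]
    rw [← h1, ← h2, hgcd]
  rw [div_eq_div_iff (Nat.cast_ne_zero.mpr hLa)
    (Nat.cast_ne_zero.mpr hLb)]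
  exact_mod_cast congrArg (fun x : ℕ => (x : ℚ)) key
end

section
/- Let a_1,...,a_n and b_1,...,b_n be positive integers such that gcd(a_{i_1}, a_{i_2}, a_{i_3}) = gcd(b_{i_1}, b_{i_2}, b_{i_3}) for all 1 ≤ i_1 < i_2 < i_3 ≤ n. Then (1/∏_{1≤i<j≤n} gcd(a_i,a_j)) · (a_1···a_n)/lcm(a_1,...,a_n) = (1/∏_{1≤i<j≤n} gcd(b_i,b_j)) · (b_1···b_n)/lcm(b_1,...,b_n), as an equality of positive rationals. -/
/-!
Comparing `q`-adic valuations, it suffices to show that for an exponent vector `e` the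
quantity `∑ eᵢ - ∑_{i<j} min eᵢ eⱼ - max eᵢ` is determined by the minima over triples.
Slicing at each height `t`, it is the sum over `t` of `k - (k choose 2) - [k ≠ 0]`, where
`k` is the size of the level set `{i | t < eᵢ}`. This term vanishes when `k ≤ 2`, and a
level set with at least three elements is determined by the triples it contains.
-/
open Finset

namespace Finset

variable {ι : Type*} [LinearOrder ι]

theorem exists_lt_lt_eq_of_card_eq_three {U : Finset ι} (hU : #U = 3) :
    ∃ i j l, i < j ∧ j < l ∧ U = {i, j, l} := by
  set f := U.orderEmbOfFin hU
  refine ⟨f 0, f 1, f 2, f.lt_iff_lt.2 (by decide), f.lt_iff_lt.2 (by decide), ?_⟩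
  ext x
  refine ⟨fun hx => ?_, ?_⟩
  · obtain ⟨k, rfl⟩ : x ∈ Set.range f := by rwa [range_orderEmbOfFin]
    fin_cases k <;> simp
  · simp only [mem_insert, mem_singleton]
    rintro (rfl | rfl | rfl) <;> exact orderEmbOfFin_mem U hU _

theorem subset_of_three_le_card {S T : Finset ι}
    (h : ∀ i j l, i < j → j < l → {i, j, l} ⊆ S → {i, j, l} ⊆ T) (hS : 3 ≤ #S) :
    S ⊆ T := by
  intro x hx
  obtain ⟨U, hxU, hUS, hU⟩ :=
    exists_subsuperset_card_eq (singleton_subset_iff.2 hx) (by simp) hS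
  obtain ⟨i, j, l, hij, hjl, rfl⟩ := exists_lt_lt_eq_of_card_eq_three hU
  exact h i j l hij hjl hUS (singleton_subset_iff.1 hxU)

theorem eq_or_card_le_two_of_forall_lt_lt {S T : Finset ι}
    (h : ∀ i j l, i < j → j < l → ({i, j, l} ⊆ S ↔ {i, j, l} ⊆ T)) :
    S = T ∨ #S ≤ 2 ∧ #T ≤ 2 := by
  wlog hS : 3 ≤ #S generalizing S T
  · by_cases hT : 3 ≤ #T
    · exact (this (fun i j l hij hjl => (h i j l hij hjl).symm) hT).imp Eq.symm And.symm
    · exact Or.inr ⟨by omega, by omega⟩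
  have hST := subset_of_three_le_card (fun i j l hij hjl => (h i j l hij hjl).1) hS
  have hTS := subset_of_three_le_card (fun i j l hij hjl => (h i j l hij hjl).2)
    (hS.trans (card_le_card hST))
  exact Or.inl (hST.antisymm hTS)

theorem card_range_filter_lt {x N : ℕ} (h : x ≤ N) : #{t ∈ range N | t < x} = x := by
  convert card_range x using 2
  ext t
  simp only [mem_filter, mem_range]
  omega

theorem sum_eq_sum_range_card_filter_lt {α : Type*} (s : Finset α) (g : α → ℕ) {N : ℕ}
    (hg : ∀ x ∈ s, g x ≤ N) : ∑ x ∈ s, g x = ∑ t ∈ range N, #{x ∈ s | t < g x} := by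
  simp_rw [card_filter]
  rw [sum_comm]
  exact sum_congr rfl fun x hx => by rw [← card_filter, card_range_filter_lt (hg x hx)]

theorem sup_eq_sum_range_ite_nonempty {α : Type*} (s : Finset α) (g : α → ℕ) {N : ℕ}
    (hg : ∀ x ∈ s, g x ≤ N) :
    s.sup g = ∑ t ∈ range N, if ({x ∈ s | t < g x} : Finset α).Nonempty then 1 else 0 := by
  simp only [filter_nonempty_iff, ← Finset.lt_sup_iff]
  rw [← card_filter, card_range_filter_lt (Finset.sup_le hg)]

theorem card_choose_two_add_ite_nonempty {α : Type*} {S : Finset α} (hS : #S ≤ 2) :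
    (#S).choose 2 + (if S.Nonempty then 1 else 0) = #S := by
  simp only [← card_pos]
  interval_cases #S <;> rfl

end Finset

section PairsAndTriples

variable {ι : Type*} [Fintype ι] [LinearOrder ι]

theorem card_filter_lt_min_eq_choose_two (g : ι → ℕ) (t : ℕ) :
    #{p ∈ ({p : ι × ι | p.1 < p.2} : Finset (ι × ι)) | t < min (g p.1) (g p.2)} =
      (#{i | t < g i}).choose 2 := by
  rw [← card_product_filter_lt]
  congr 1
  ext p
  simp only [mem_filter, mem_univ, true_and, mem_product, lt_min_iff]
  tauto

theorem sum_add_sum_min_add_sup_eq_of_triple_min_eq (e f : ι → ℕ)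
    (h : ∀ i j l, i < j → j < l → min (e i) (min (e j) (e l)) = min (f i) (min (f j) (f l))) :
    ∑ i, e i + (∑ p ∈ {p : ι × ι | p.1 < p.2}, min (f p.1) (f p.2) + univ.sup f) =
      ∑ i, f i + (∑ p ∈ {p : ι × ι | p.1 < p.2}, min (e p.1) (e p.2) + univ.sup e) := by
  set N := univ.sup e + univ.sup f
  have he (i) (_ : i ∈ univ) : e i ≤ N := (le_sup (mem_univ i)).trans le_self_add
  have hf (i) (_ : i ∈ univ) : f i ≤ N := (le_sup (mem_univ i)).trans le_add_self
  rw [sum_eq_sum_range_card_filter_lt univ e he, sum_eq_sum_range_card_filter_lt univ f hf,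
    sum_eq_sum_range_card_filter_lt _ _ fun p _ => (min_le_left _ _).trans (hf p.1 (mem_univ _)),
    sum_eq_sum_range_card_filter_lt _ _ fun p _ => (min_le_left _ _).trans (he p.1 (mem_univ _)),
    sup_eq_sum_range_ite_nonempty univ e he, sup_eq_sum_range_ite_nonempty univ f hf]
  simp only [card_filter_lt_min_eq_choose_two, ← sum_add_distrib]
  refine sum_congr rfl fun t _ => ?_
  have hlevel (i j l : ι) (hij : i < j) (hjl : j < l) :
      {i, j, l} ⊆ ({i | t < e i} : Finset ι) ↔ {i, j, l} ⊆ ({i | t < f i} : Finset ι) := by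
    simpa [insert_subset_iff, lt_min_iff] using congrArg (t < ·) (h i j l hij hjl)
  rcases eq_or_card_le_two_of_forall_lt_lt hlevel with heq | ⟨hle, hlf⟩
  · rw [heq]
  · rw [card_choose_two_add_ite_nonempty hle, card_choose_two_add_ite_nonempty hlf, add_comm]

theorem prod_mul_prod_gcd_mul_lcm_ne_zero {a b : ι → ℕ} (ha : ∀ i, a i ≠ 0)
    (hb : ∀ i, b i ≠ 0) :
    (∏ i, a i) * ((∏ p ∈ {p : ι × ι | p.1 < p.2}, Nat.gcd (b p.1) (b p.2)) *
      univ.lcm b) ≠ 0 := by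
  simp [Finset.prod_ne_zero_iff, Finset.lcm_eq_zero_iff, ha, hb]

theorem factorization_prod_mul_prod_gcd_mul_lcm {a b : ι → ℕ} (ha : ∀ i, a i ≠ 0)
    (hb : ∀ i, b i ≠ 0) (q : ℕ) :
    ((∏ i, a i) * ((∏ p ∈ {p : ι × ι | p.1 < p.2}, Nat.gcd (b p.1) (b p.2)) *
        univ.lcm b)).factorization q =
      ∑ i, (a i).factorization q +
        (∑ p ∈ {p : ι × ι | p.1 < p.2},
            min ((b p.1).factorization q) ((b p.2).factorization q) +
          univ.sup fun i => (b i).factorization q) := by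
  have hgcd (p : ι × ι) : Nat.gcd (b p.1) (b p.2) ≠ 0 := Nat.gcd_ne_zero_left (hb p.1)
  simp [Nat.factorization_mul, Nat.factorization_prod_apply, Nat.factorization_gcd,
    Finset.factorization_lcm, Finset.prod_ne_zero_iff, Finset.lcm_eq_zero_iff, ha, hb, hgcd]

theorem prod_mul_prod_gcd_mul_lcm_eq {a b : ι → ℕ} (ha : ∀ i, a i ≠ 0)
    (hb : ∀ i, b i ≠ 0) (h : ∀ i j l, i < j → j < l →
      Nat.gcd (a i) (Nat.gcd (a j) (a l)) = Nat.gcd (b i) (Nat.gcd (b j) (b l))) :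
    (∏ i, a i) * ((∏ p ∈ {p : ι × ι | p.1 < p.2}, Nat.gcd (b p.1) (b p.2)) *
        univ.lcm b) =
      (∏ i, b i) * ((∏ p ∈ {p : ι × ι | p.1 < p.2}, Nat.gcd (a p.1) (a p.2)) *
        univ.lcm a) := by
  refine Nat.eq_of_factorization_eq (prod_mul_prod_gcd_mul_lcm_ne_zero ha hb)
    (prod_mul_prod_gcd_mul_lcm_ne_zero hb ha) fun q => ?_
  rw [factorization_prod_mul_prod_gcd_mul_lcm ha hb,
    factorization_prod_mul_prod_gcd_mul_lcm hb ha]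
  refine sum_add_sum_min_add_sup_eq_of_triple_min_eq (fun i => (a i).factorization q)
    (fun i => (b i).factorization q) fun i j l hij hjl => ?_
  simpa [Nat.factorization_gcd, Nat.gcd_ne_zero_left, ha, hb] using
    congrArg (fun m : ℕ => m.factorization q) (h i j l hij hjl)

end PairsAndTriples

theorem stmt2 (n : ℕ) (a b : Fin n → ℕ) (ha : ∀ i, 0 < a i) (hb : ∀ i, 0 < b i)
    (h : ∀ i j l : Fin n, i < j → j < l →
      Nat.gcd (a i) (Nat.gcd (a j) (a l)) = Nat.gcd (b i) (Nat.gcd (b j) (b l))) :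
    (1 / ∏ p ∈ Finset.univ.filter (fun p : Fin n × Fin n => p.1 < p.2),
        ((Nat.gcd (a p.1) (a p.2) : ℕ) : ℚ)) *
      ((∏ i, (a i : ℚ)) / ((Finset.univ.lcm a : ℕ) : ℚ)) =
    (1 / ∏ p ∈ Finset.univ.filter (fun p : Fin n × Fin n => p.1 < p.2),
        ((Nat.gcd (b p.1) (b p.2) : ℕ) : ℚ)) *
      ((∏ i, (b i : ℚ)) / ((Finset.univ.lcm b : ℕ) : ℚ)) := by
  have ha' (i : Fin n) : a i ≠ 0 := (ha i).ne'
  have hb' (i : Fin n) : b i ≠ 0 := (hb i).ne'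
  have key := prod_mul_prod_gcd_mul_lcm_eq ha' hb' h
  have hA := prod_mul_prod_gcd_mul_lcm_ne_zero ha' ha'
  have hB := prod_mul_prod_gcd_mul_lcm_ne_zero hb' hb'
  simp only [mul_ne_zero_iff] at hA hB
  obtain ⟨-, hPa, hLa⟩ := hA
  obtain ⟨-, hPb, hLb⟩ := hB
  qify at key hPa hLa hPb hLb
  field_simp
  linear_combination key
end

section
/- Let k ≥ 0, a ≥ 1, b ≥ 0 be integers, and define g_{k,a,b}(n) = (∏_{i=0}^{k} (b+(n+i)a)) / lcm(b+na, b+(n+1)a, ..., b+(n+k)a) for positive integers n. Then L_k := lcm(1,2,...,k) is a period of g_{k,a,b}, i.e., g_{k,a,b}(n + L_k) = g_{k,a,b}(n) for all n ≥ 1. -/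
/-!
Since `gcd(M, x) * lcm(M, x) = M * x`, appending a term `x` to a list of positive integers with
least common multiple `M` multiplies `∏ / lcm` by `gcd(M, x)`, which is the lcm of the gcds of `x`
with the earlier terms. So `∏ / lcm` depends only on the pairwise gcds of the terms. In an
arithmetic progression, `gcd(b + (n + i)a, b + (n + j)a) = gcd(b + (n + i)a, (j - i)a)` does not
change when `n` is shifted by a multiple of `j - i`, and `L_k` is a multiple of every `j - i ≤ k`.
-/

open Finset

theorem Nat.gcd_lcm_distrib_right (a b c : ℕ) :
    Nat.gcd (Nat.lcm a b) c = Nat.lcm (Nat.gcd a c) (Nat.gcd b c) := by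
  rcases eq_or_ne a 0 with rfl | ha
  · simpa using
      Nat.dvd_antisymm (Nat.dvd_lcm_left _ _) (Nat.lcm_dvd dvd_rfl (Nat.gcd_dvd_right b c))
  rcases eq_or_ne b 0 with rfl | hb
  · simpa using
      Nat.dvd_antisymm (Nat.dvd_lcm_right _ _) (Nat.lcm_dvd (Nat.gcd_dvd_right a c) dvd_rfl)
  rcases eq_or_ne c 0 with rfl | hc
  · simp
  refine Nat.factorization_inj (Nat.gcd_ne_zero_right hc)
    (Nat.lcm_ne_zero (Nat.gcd_ne_zero_right hc) (Nat.gcd_ne_zero_right hc)) ?_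
  ext p
  simp only [Nat.factorization_gcd (Nat.lcm_ne_zero ha hb) hc, Nat.factorization_lcm ha hb,
    Nat.factorization_lcm (Nat.gcd_ne_zero_right hc) (Nat.gcd_ne_zero_right hc),
    Nat.factorization_gcd ha hc, Nat.factorization_gcd hb hc, Finsupp.inf_apply, Finsupp.sup_apply]
  exact inf_sup_right _ _ _

theorem Finset.gcd_lcm_distrib_right {ι : Type*} (s : Finset ι) (f : ι → ℕ) (c : ℕ) :
    Nat.gcd (s.lcm f) c = s.lcm fun i => Nat.gcd (f i) c := by
  classical
  induction s using Finset.induction with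
  | empty => simp
  | insert x s _ ih =>
    rw [lcm_insert, lcm_insert, ← ih]
    exact Nat.gcd_lcm_distrib_right _ _ _

theorem Nat.gcd_add_mul_self_add_mul_of_dvd {d m : ℕ} (hdm : d ∣ m) (x a : ℕ) :
    Nat.gcd (x + m * a) (x + m * a + d * a) = Nat.gcd x (x + d * a) := by
  obtain ⟨t, rfl⟩ := hdm
  rw [Nat.gcd_self_add_right, Nat.gcd_self_add_right, show d * t * a = t * (d * a) by ring,
    Nat.gcd_add_mul_right_left]

def prodDivLcm (f : ℕ → ℕ) (k : ℕ) : ℕ :=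
  (∏ i ∈ range k, f i) / (range k).lcm f

theorem prodDivLcm_succ {f : ℕ → ℕ} (hf : ∀ i, f i ≠ 0) (k : ℕ) :
    prodDivLcm f (k + 1) = prodDivLcm f k * Nat.gcd ((range k).lcm f) (f k) := by
  set M := (range k).lcm f
  obtain ⟨q, hq⟩ : M ∣ ∏ i ∈ range k, f i := lcm_dvd_prod _ _
  have hM : M ≠ 0 := by simpa [M, Finset.lcm_eq_zero_iff] using fun i _ => hf i
  have hL : Nat.lcm M (f k) ≠ 0 := Nat.lcm_ne_zero hM (hf k)
  have hlcm : (range (k + 1)).lcm f = Nat.lcm M (f k) := by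
    rw [range_add_one, lcm_insert]
    exact Nat.lcm_comm _ _
  calc prodDivLcm f (k + 1) = q * (Nat.gcd M (f k) * Nat.lcm M (f k)) / Nat.lcm M (f k) := by
        rw [prodDivLcm, prod_range_succ, hq, hlcm, Nat.gcd_mul_lcm]; ring_nf
    _ = prodDivLcm f k * Nat.gcd M (f k) := by
        rw [prodDivLcm, hq, ← mul_assoc, Nat.mul_div_cancel _ (Nat.pos_of_ne_zero hL),
          Nat.mul_div_cancel_left _ (Nat.pos_of_ne_zero hM)]

theorem prodDivLcm_eq_of_gcd_eq {f g : ℕ → ℕ} (hf : ∀ i, f i ≠ 0) (hg : ∀ i, g i ≠ 0) {k : ℕ}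
    (hfg : ∀ i j, i < j → j < k → Nat.gcd (f i) (f j) = Nat.gcd (g i) (g j)) :
    prodDivLcm f k = prodDivLcm g k := by
  induction k with
  | zero => simp [prodDivLcm]
  | succ k ih =>
    rw [prodDivLcm_succ hf, prodDivLcm_succ hg, ih fun i j hij hj => hfg i j hij (by omega),
      gcd_lcm_distrib_right, gcd_lcm_distrib_right]
    exact congrArg _ (lcm_congr rfl fun i hi => hfg i k (mem_range.mp hi) k.lt_succ_self)

theorem gcd_arithmetic_progression_shift (a b n : ℕ) {m i j : ℕ} (hij : i ≤ j) (hm : j - i ∣ m) :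
    Nat.gcd (b + (n + m + i) * a) (b + (n + m + j) * a) =
      Nat.gcd (b + (n + i) * a) (b + (n + j) * a) := by
  obtain ⟨d, rfl⟩ := Nat.exists_eq_add_of_le hij
  rw [Nat.add_sub_cancel_left] at hm
  convert Nat.gcd_add_mul_self_add_mul_of_dvd hm (b + (n + i) * a) a using 2 <;> ring

theorem stmt3 (k a b : ℕ) (ha : 1 ≤ a) (n : ℕ) (hn : 1 ≤ n) :
    (∏ i ∈ Finset.range (k+1), (b + (n + (Finset.Icc 1 k).lcm id + i) * a)) /
      (Finset.range (k+1)).lcm (fun i => b + (n + (Finset.Icc 1 k).lcm id + i) * a) =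
    (∏ i ∈ Finset.range (k+1), (b + (n + i) * a)) /
      (Finset.range (k+1)).lcm (fun i => b + (n + i) * a) := by
  have hpos : ∀ c i, b + (n + c + i) * a ≠ 0 := fun c i => by
    have := Nat.mul_pos (show 0 < n + c + i by omega) ha
    omega
  refine prodDivLcm_eq_of_gcd_eq (hpos _) (hpos 0) fun i j hij hj => ?_
  exact gcd_arithmetic_progression_shift a b n hij.le
    (Finset.dvd_lcm (mem_Icc.mpr ⟨by omega, by omega⟩))
end

section
/- Let k ≥ 0, a ≥ 1, b ≥ 0 be integers with a and b coprime, let n be a positive integer, and set u_i = b + (n+i)a for 0 ≤ i ≤ k. Then (∏_{i=0}^{k} u_i) / lcm(u_0, u_1, ..., u_k) divides k!. -/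
open Finset

lemma S_succ (a x : ℚ) (k : ℕ) :
    ∑ i ∈ range (k+2), (-1:ℚ)^i * ((k+1).choose i) / (x + i*a)
    = (∑ i ∈ range (k+1), (-1:ℚ)^i * (k.choose i) / (x + i*a))
      - ∑ i ∈ range (k+1), (-1:ℚ)^i * (k.choose i) / ((x+a) + i*a) := by
  have hA : ∑ i ∈ range (k+1), (-1:ℚ)^i * (k.choose i) / (x + i*a)
      = (∑ i ∈ range (k+1), (-1:ℚ)^(i+1) * (k.choose (i+1)) / (x + (i+1)*a)) + 1/x := by
    rw [Finset.sum_range_succ (fun i => (-1:ℚ)^(i+1) * (k.choose (i+1)) / (x + (i+1)*a)) k]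
    rw [Nat.choose_succ_self]
    rw [Finset.sum_range_succ' (fun i => (-1:ℚ)^i * (k.choose i) / (x + i*a)) k]
    simp
  have hB : ∑ i ∈ range (k+1), (-1:ℚ)^i * (k.choose i) / ((x+a) + i*a)
      = ∑ i ∈ range (k+1), (-1:ℚ)^i * (k.choose i) / (x + (i+1)*a) := by
    refine Finset.sum_congr rfl (fun i _ => ?_)
    ring_nf
  rw [hA, hB]
  rw [Finset.sum_range_succ' (fun i => (-1:ℚ)^i * ((k+1).choose i) / (x + i*a)) (k+1)]
  have h2 : ∑ i ∈ range (k+1), (-1:ℚ)^(i+1) * ((k+1).choose (i+1)) / (x + ↑(i+1) * a)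
      = ∑ i ∈ range (k+1), ((-1:ℚ)^(i+1) * (k.choose (i+1)) / (x + (↑i+1)*a)
          - (-1:ℚ)^i * (k.choose i) / (x + (↑i+1)*a)) := by
    refine Finset.sum_congr rfl fun i _ => ?_
    rw [Nat.choose_succ_succ]; push_cast; ring
  rw [h2, Finset.sum_sub_distrib]
  simp
  ring

lemma key (a : ℚ) (ha : 0 < a) : ∀ (k : ℕ) (x : ℚ), 0 < x →
    ∑ i ∈ range (k+1), (-1:ℚ)^i * (k.choose i) / (x + i*a)
    = (k.factorial : ℚ) * a^k / ∏ i ∈ range (k+1), (x + i*a) := by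
  intro k
  induction k with
  | zero => intro x hx; simp
  | succ k ih =>
    intro x hx
    have hxa : 0 < x + a := by linarith
    have hpos : ∀ (y : ℚ), 0 < y → 0 < ∏ i ∈ range (k+1), (y + i*a) := by
      intro y hy
      refine Finset.prod_pos (fun i _ => ?_)
      have : (0:ℚ) ≤ (i:ℚ)*a := by positivity
      linarith
    have hA := hpos x hx
    have hB := hpos (x+a) hxa
    have hC : 0 < ∏ i ∈ range (k+2), (x + i*a) := by
      refine Finset.prod_pos (fun i _ => ?_)
      have : (0:ℚ) ≤ (i:ℚ)*a := by positivity
      linarith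
    have hg1 : ∏ i ∈ range (k+2), (x + i*a)
        = (∏ i ∈ range (k+1), (x + i*a)) * (x + (k+1)*a) := by
      rw [Finset.prod_range_succ]; push_cast; ring
    have hg2 : ∏ i ∈ range (k+2), (x + i*a)
        = (∏ i ∈ range (k+1), ((x+a) + i*a)) * x := by
      rw [Finset.prod_range_succ' (fun i => x + (i:ℚ)*a) (k+1)]
      push_cast
      rw [show x + (0:ℚ)*a = x by ring]
      congr 1
      exact Finset.prod_congr rfl fun i _ => by ring
    have hg1' : (∏ i ∈ range (k+1), ((x+a) + i*a)) * x
        = (∏ i ∈ range (k+1), (x + i*a)) * (x + ((k:ℚ)+1)*a) := by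
      rw [← hg2, hg1]
    rw [S_succ, ih x hx, ih (x+a) hxa,
      div_sub_div _ _ hA.ne' hB.ne', div_eq_div_iff (by positivity) hC.ne', hg2]
    push_cast [Nat.factorial_succ]
    linear_combination ((k.factorial : ℚ) * a ^ k * (∏ i ∈ range (k+1), ((x+a) + (i:ℚ)*a))) * hg1'

theorem stmt4 (k a b : ℕ) (ha : 1 ≤ a) (hab : Nat.gcd a b = 1) (n : ℕ) (hn : 1 ≤ n) :
    (∏ i ∈ Finset.range (k+1), (b + (n + i) * a)) /
      (Finset.range (k+1)).lcm (fun i => b + (n + i) * a) ∣ Nat.factorial k := by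
  set u : ℕ → ℕ := fun i => b + (n + i) * a with hu
  set P := ∏ i ∈ range (k+1), u i with hP
  set L := (range (k+1)).lcm u with hL
  have hupos : ∀ i, 0 < u i := by
    intro i
    have := Nat.mul_pos (show 0 < n + i by omega) (show 0 < a from ha)
    simp only [hu]; omega
  have hLP : L ∣ P := Finset.lcm_dvd fun i hi => Finset.dvd_prod_of_mem u hi
  have hPpos : 0 < P := Finset.prod_pos fun i _ => hupos i
  set Q : ℕ → ℕ := fun i => P / u i with hQ
  have hdvdQ : ∀ i ∈ range (k+1), P / L ∣ Q i := by
    intro i hi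
    have hLpos : 0 < L := Nat.pos_of_ne_zero fun h => by
      rw [h] at hLP
      exact absurd (Nat.eq_zero_of_zero_dvd hLP) hPpos.ne'
    obtain ⟨c, hc⟩ := Finset.dvd_lcm (f := u) hi
    rw [← hL] at hc
    obtain ⟨d, hd⟩ := hLP
    have h1 : Q i = c * d := by
      simp only [hQ, hd, hc]
      rw [mul_assoc, Nat.mul_div_cancel_left _ (hupos i)]
    have h2 : P / L = d := by rw [hd, Nat.mul_div_cancel_left _ hLpos]
    rw [h1, h2]
    exact Dvd.intro_left c rfl
  -- rational identity
  have ha' : (0:ℚ) < a := by exact_mod_cast ha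
  set x : ℚ := (b : ℚ) + n * a with hx
  have hxpos : 0 < x := by
    have : (1:ℚ) ≤ (n:ℚ) * a := by
      have : 1 ≤ n * a := Nat.one_le_iff_ne_zero.mpr (by positivity)
      exact_mod_cast this
    have hb : (0:ℚ) ≤ b := Nat.cast_nonneg b
    simp only [hx]; linarith
  have hxu : ∀ i : ℕ, ((u i : ℕ) : ℚ) = x + i * a := by
    intro i; simp only [hu, hx]; push_cast; ring
  have hPQ : (P : ℚ) = ∏ i ∈ range (k+1), (x + i * a) := by
    rw [hP, Nat.cast_prod]
    exact Finset.prod_congr rfl fun i _ => hxu i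
  have hPne : (P : ℚ) ≠ 0 := by exact_mod_cast hPpos.ne'
  have hsum : ((k.factorial * a ^ k : ℕ) : ℚ)
      = ∑ i ∈ range (k+1), (-1:ℚ)^i * (k.choose i) * (Q i) := by
    have hk := key (a:ℚ) ha' k x hxpos
    have h1 : ∀ i ∈ range (k+1), (-1:ℚ)^i * (k.choose i) * (Q i)
        = ((-1:ℚ)^i * (k.choose i) / (x + i*a)) * P := by
      intro i hi
      have hdvd : u i ∣ P := Finset.dvd_prod_of_mem u hi
      have hQc : ((Q i : ℕ) : ℚ) = (P:ℚ) / (u i) :=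
        Nat.cast_div hdvd (by exact_mod_cast (hupos i).ne')
      rw [hQc, ← hxu i]; ring
    rw [Finset.sum_congr rfl h1, ← Finset.sum_mul, hk, ← hPQ, div_mul_cancel₀ _ hPne]
    push_cast; ring
  have hz : ((k.factorial * a ^ k : ℕ) : ℤ)
      = ∑ i ∈ range (k+1), (-1:ℤ)^i * (k.choose i) * (Q i) := by
    exact_mod_cast hsum
  have hdvdZ : ((P / L : ℕ) : ℤ) ∣ ((k.factorial * a ^ k : ℕ) : ℤ) := by
    rw [hz]
    exact Finset.dvd_sum fun i hi =>
      Dvd.dvd.mul_left (Int.natCast_dvd_natCast.mpr (hdvdQ i hi)) _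
  have hdvdN : P / L ∣ k.factorial * a ^ k := Int.natCast_dvd_natCast.mp hdvdZ
  have hcopa : Nat.Coprime a P := by
    refine Nat.Coprime.prod_right fun i _ => ?_
    exact (Nat.coprime_add_mul_right_right a b (n+i)).mpr hab
  have hcop : Nat.Coprime (P / L) a :=
    Nat.Coprime.coprime_dvd_left (Nat.div_dvd_of_dvd hLP) hcopa.symm
  exact (hcop.pow_right k).dvd_of_dvd_mul_right hdvdN
end

section
/- Let (u_i)_{i≥0} be a strictly increasing arithmetic progression of positive integers, with common difference r and first term u_0 so u_i = u_0 + i·r, and let k ≥ 0 be an integer. Then (u_0·u_1···u_k) / (k! · gcd(u_0,u_1)^k) divides lcm(u_0, u_1, ..., u_k), in the sense that k! · gcd(u_0,u_1)^k · lcm(u_0,...,u_k) is divisible by u_0·u_1···u_k. -/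
/-!
Write `u₀ = d a`, `r = d s` with `d = gcd u₀ r` and `a`, `s` coprime; both sides scale by
`d ^ (k + 1)`, so it suffices to treat coprime `a`, `s`. With `L` the lcm of the `a + i s`, the
`k`-th forward difference with step `s` of `x ↦ L / x` at `a` is an integer combination of the
integers `L / (a + i s)`, and it equals `(-1)^k k! s^k L / ∏ (a + i s)`. Hence `∏ (a + i s)` divides
`k! s^k L`, and `s^k` cancels because every `a + i s` is coprime to `s`.
-/

open Finset Nat

theorem fwdDiff_iter_mem {M G : Type*} [AddCommMonoid M] [AddCommGroup G] (h : M) (f : M → G)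
    (S : AddSubgroup G) (n : ℕ) (y : M) (hf : ∀ i ≤ n, f (y + i • h) ∈ S) :
    (fwdDiff h)^[n] f y ∈ S := by
  rw [fwdDiff_iter_eq_sum_shift]
  exact sum_mem fun i hi => zsmul_mem (hf i (mem_range_succ_iff.mp hi)) _

theorem fwdDiff_iter_inv {K : Type*} [Field K] (h : K) (n : ℕ) (x : K)
    (hx : ∀ i ≤ n, x + i * h ≠ 0) :
    (fwdDiff h)^[n] (fun x => x⁻¹) x =
      (-1) ^ n * n ! * h ^ n / ∏ i ∈ range (n + 1), (x + i * h) := by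
  induction n generalizing x with
  | zero => simp
  | succ n ih =>
    set P := ∏ i ∈ range (n + 1), (x + i * h)
    set P' := ∏ i ∈ range (n + 1), (x + h + i * h)
    have hshift : P' * x = P * (x + (n + 1 : ℕ) * h) := by
      rw [← prod_range_succ, prod_range_succ' _ (n + 1)]
      push_cast
      simp only [zero_mul, add_zero]
      exact congrArg (· * x) (prod_congr rfl fun i _ => by ring)
    have hP : P ≠ 0 := prod_ne_zero_iff.2 fun i hi => hx i (by have := mem_range.mp hi; omega)
    have hlast : x + (n + 1 : ℕ) * h ≠ 0 := hx (n + 1) le_rfl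
    have hP' : P' ≠ 0 := fun h0 => by
      rw [h0, zero_mul] at hshift; exact mul_ne_zero hP hlast hshift.symm
    rw [Function.iterate_succ_apply', fwdDiff, ih x fun i hi => hx i (by omega),
      ih (x + h) fun i hi => by convert hx (i + 1) (by omega) using 1; push_cast; ring,
      prod_range_succ (fun i : ℕ => x + i * h) (n + 1), div_sub_div _ _ hP' hP,
      div_eq_div_iff (mul_ne_zero hP' hP) (mul_ne_zero hP hlast)]
    push_cast [factorial_succ] at hshift ⊢
    linear_combination -(-1) ^ n * n ! * h ^ n * P * hshift

theorem Finset.lcm_mul_left_of_nonempty {α β : Type*} [CommMonoidWithZero α]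
    [StrongNormalizedGCDMonoid α] {s : Finset β} (hs : s.Nonempty) (f : β → α) (a : α) :
    (s.lcm fun x => a * f x) = normalize a * s.lcm f := by
  classical
  induction hs using Finset.Nonempty.cons_induction with
  | singleton b => simp
  | cons b t hb ht ih =>
    rw [cons_eq_insert, lcm_insert, lcm_insert, ih, ← _root_.lcm_mul_left]
    exact lcm_eq_of_associated_right ((normalize_associated a).mul_right _) _

theorem prod_add_mul_dvd_factorial_mul_pow_mul_lcm (a s k : ℕ) :
    ∏ i ∈ range (k + 1), (a + i * s) ∣ k ! * s ^ k * (range (k + 1)).lcm (fun i => a + i * s) := by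
  set L := (range (k + 1)).lcm (fun i => a + i * s)
  set P := ∏ i ∈ range (k + 1), (a + i * s)
  rcases Nat.eq_zero_or_pos a with rfl | ha
  · have hL : L = 0 := lcm_eq_zero_iff.2 ⟨0, by simp⟩
    simp [hL]
  have hx : ∀ i ≤ k, (a + i * s : ℚ) ≠ 0 := fun i _ => by positivity
  obtain ⟨z, hz⟩ : (fwdDiff (s : ℚ))^[k] ((L : ℚ) • fun x => x⁻¹) a ∈ (Int.castAddHom ℚ).range := by
    refine fwdDiff_iter_mem _ _ _ _ _ fun i hi => ⟨((L / (a + i * s) : ℕ) : ℤ), ?_⟩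
    have hdvd : a + i * s ∣ L := dvd_lcm (mem_range.mpr (lt_succ_of_le hi))
    simp only [Int.coe_castAddHom, Int.cast_natCast, Pi.smul_apply, smul_eq_mul, nsmul_eq_mul]
    rw [Nat.cast_div hdvd (by push_cast; exact hx i hi), div_eq_mul_inv]
    push_cast
    ring
  rw [fwdDiff_iter_const_smul, Pi.smul_apply, fwdDiff_iter_inv _ _ _ hx] at hz
  have hPq : (P : ℚ) ≠ 0 := by
    push_cast [P]; exact prod_ne_zero_iff.2 fun i hi => hx i (mem_range_succ_iff.mp hi)
  have hfactor : ((k ! * s ^ k * L : ℕ) : ℤ) = P * ((-1) ^ k * z) := by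
    apply Int.cast_injective (α := ℚ)
    push_cast [P] at hz hPq ⊢
    rw [Int.coe_castAddHom, smul_eq_mul] at hz
    field_simp at hz
    have hsq : ((-1 : ℚ) ^ k) ^ 2 = 1 := by rw [← pow_mul, pow_mul', neg_one_sq, one_pow]
    linear_combination -(-1) ^ k * hz - k ! * s ^ k * L * hsq
  exact Int.natCast_dvd_natCast.mp ⟨_, hfactor⟩

theorem prod_add_mul_dvd_factorial_mul_lcm_of_coprime {a s : ℕ} (h : a.Coprime s) (k : ℕ) :
    ∏ i ∈ range (k + 1), (a + i * s) ∣ k ! * (range (k + 1)).lcm (fun i => a + i * s) := by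
  have hcop : (∏ i ∈ range (k + 1), (a + i * s)).Coprime (s ^ k) :=
    Coprime.pow_right _ (Coprime.prod_left fun i _ => (coprime_add_mul_right_left a s i).2 h)
  have := prod_add_mul_dvd_factorial_mul_pow_mul_lcm a s k
  rw [mul_right_comm] at this
  exact hcop.dvd_of_dvd_mul_right this

theorem stmt5_general (u₀ r k : ℕ) :
    (∏ i ∈ Finset.range (k+1), (u₀ + i * r)) ∣
      Nat.factorial k * (Nat.gcd u₀ (u₀ + r)) ^ k *
        (Finset.range (k+1)).lcm (fun i => u₀ + i * r) := by
  rw [Nat.gcd_self_add_right]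
  obtain ⟨a, s, hcop, hu, hr⟩ := Nat.exists_coprime u₀ r
  generalize u₀.gcd r = d at hu hr ⊢
  subst hu hr
  have hscale : (fun i : ℕ => a * d + i * (s * d)) = fun i => d * (a + i * s) := by
    funext i; ring
  rw [hscale, prod_mul_distrib, prod_const, card_range,
    lcm_mul_left_of_nonempty nonempty_range_add_one, normalize_eq]
  calc d ^ (k + 1) * ∏ i ∈ range (k + 1), (a + i * s)
      ∣ d ^ (k + 1) * (k ! * (range (k + 1)).lcm fun i => a + i * s) :=
        mul_dvd_mul_left _ (prod_add_mul_dvd_factorial_mul_lcm_of_coprime hcop k)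
    _ = k ! * d ^ k * (d * (range (k + 1)).lcm fun i => a + i * s) := by ring

theorem stmt5 (u₀ r k : ℕ) (hu : 0 < u₀) (hr : 0 < r) :
    (∏ i ∈ Finset.range (k+1), (u₀ + i * r)) ∣
      Nat.factorial k * (Nat.gcd u₀ (u₀ + r)) ^ k *
        (Finset.range (k+1)).lcm (fun i => u₀ + i * r) :=
  stmt5_general u₀ r k
end

section
/- Let k ≥ 1, a ≥ 1, b ≥ 0 be integers with gcd(a,b)=1, let p be a prime with p ∤ a, and let n be a positive integer. Then v_p(g_{k,a,b}(n)) = ∑_{e=1}^{E} (#{0 ≤ i ≤ k : p^e ∣ b+(n+i)a} − 1), where E = ⌊log_p k⌋ and g_{k,a,b}(n) = (∏_{i=0}^{k}(b+(n+i)a)) / lcm(b+na, ..., b+(n+k)a). -/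
/-!
Count prime powers instead of computing valuations: for `B` large, `v_p(∏ tᵢ)` is the number
of pairs `(e, i)` with `1 ≤ e < B` and `p ^ e ∣ tᵢ`, while `v_p(lcm tᵢ)` is the number of `e`
for which some `tᵢ` is divisible by `p ^ e`. Hence `v_p(∏ tᵢ / lcm tᵢ) = ∑ₑ (cₑ - 1)`, where
`cₑ` counts the terms divisible by `p ^ e` (truncated subtraction absorbs `cₑ = 0`). For the
arithmetic progression `b + (n + i) a`, `0 ≤ i ≤ k`, two terms divisible by `p ^ e` differ by
`(j - i) a` with `p ∤ a`, so `p ^ e ∣ j - i`; once `p ^ e > k` at most one term qualifies.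
-/

open Finset

namespace Nat

theorem factorization_eq_card_pow_dvd_of_factorization_lt {m p B : ℕ} (hp : p.Prime)
    (hm : m ≠ 0) (hB : m.factorization p < B) :
    m.factorization p = #{e ∈ Ico 1 B | p ^ e ∣ m} := by
  have : {e ∈ Ico 1 B | p ^ e ∣ m} = Icc 1 (m.factorization p) := by
    ext e
    simp only [mem_filter, mem_Ico, mem_Icc, hp.pow_dvd_iff_le_factorization hm]
    omega
  rw [this, card_Icc, add_tsub_cancel_right]

section FinsetProdLcm

variable {ι : Type*} {s : Finset ι} {t : ι → ℕ} {p B : ℕ}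

theorem factorization_prod_eq_sum_card_pow_dvd (hp : p.Prime) (ht : ∀ i ∈ s, t i ≠ 0)
    (hB : ∀ i ∈ s, (t i).factorization p < B) :
    (∏ i ∈ s, t i).factorization p = ∑ e ∈ Ico 1 B, #{i ∈ s | p ^ e ∣ t i} := by
  rw [factorization_prod ht, sum_apply']
  calc ∑ i ∈ s, (t i).factorization p
      = ∑ i ∈ s, ∑ e ∈ Ico 1 B, if p ^ e ∣ t i then 1 else 0 :=
        sum_congr rfl fun i hi ↦ by
          rw [← card_filter, ← factorization_eq_card_pow_dvd_of_factorization_lt hp (ht i hi)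
            (hB i hi)]
    _ = ∑ e ∈ Ico 1 B, #{i ∈ s | p ^ e ∣ t i} := by
      rw [sum_comm]
      simp only [card_filter]

theorem Prime.pow_dvd_finset_lcm_iff (hp : p.Prime) (ht : ∀ i ∈ s, t i ≠ 0) {e : ℕ}
    (he : e ≠ 0) : p ^ e ∣ s.lcm t ↔ ∃ i ∈ s, p ^ e ∣ t i := by
  have hL : s.lcm t ≠ 0 := Finset.lcm_ne_zero_iff.mpr ht
  rw [hp.pow_dvd_iff_le_factorization hL, Finset.factorization_lcm ht,
    Finset.le_sup_iff (pos_of_ne_zero he)]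
  exact exists_congr fun i ↦ and_congr_right fun hi ↦
    (hp.pow_dvd_iff_le_factorization (ht i hi)).symm

theorem factorization_finset_lcm_eq_card_pow_dvd (hp : p.Prime) (ht : ∀ i ∈ s, t i ≠ 0)
    (hB : ∀ i ∈ s, (t i).factorization p < B) :
    (s.lcm t).factorization p = #{e ∈ Ico 1 B | ∃ i ∈ s, p ^ e ∣ t i} := by
  rcases s.eq_empty_or_nonempty with rfl | ⟨i, hi⟩
  · simp
  have hLB : (s.lcm t).factorization p < B := by
    rw [Finset.factorization_lcm ht]
    exact (Finset.sup_lt_iff ((zero_le _).trans_lt (hB i hi))).mpr hB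
  rw [factorization_eq_card_pow_dvd_of_factorization_lt hp (Finset.lcm_ne_zero_iff.mpr ht) hLB]
  exact congrArg card <| filter_congr fun e he ↦
    hp.pow_dvd_finset_lcm_iff ht (by simp only [mem_Ico] at he; omega)

theorem factorization_prod_div_finset_lcm (hp : p.Prime) (ht : ∀ i ∈ s, t i ≠ 0)
    (hB : ∀ i ∈ s, (t i).factorization p < B) :
    ((∏ i ∈ s, t i) / s.lcm t).factorization p =
      ∑ e ∈ Ico 1 B, (#{i ∈ s | p ^ e ∣ t i} - 1) := by
  rw [factorization_div (s.lcm_dvd_prod t), Finsupp.tsub_apply,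
    factorization_prod_eq_sum_card_pow_dvd hp ht hB,
    factorization_finset_lcm_eq_card_pow_dvd hp ht hB, card_filter, ← sum_tsub_distrib]
  · refine sum_congr rfl fun e _ ↦ ?_
    split_ifs with h
    · rfl
    · rw [Finset.card_eq_zero.mpr (filter_eq_empty_iff.mpr fun i hi hdvd ↦ h ⟨i, hi, hdvd⟩)]
  · intro e _
    split_ifs with h
    · obtain ⟨i, hi, hdvd⟩ := h
      exact Finset.card_pos.mpr ⟨i, mem_filter.mpr ⟨hi, hdvd⟩⟩
    · exact zero_le _

end FinsetProdLcm

end Nat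

theorem padicValNat_prod_div_finset_lcm {ι : Type*} {s : Finset ι} {t : ι → ℕ} {p E : ℕ}
    (hp : p.Prime) (ht : ∀ i ∈ s, t i ≠ 0)
    (hE : ∀ e, E < e → #{i ∈ s | p ^ e ∣ t i} ≤ 1) :
    padicValNat p ((∏ i ∈ s, t i) / s.lcm t) =
      ∑ e ∈ Icc 1 E, (#{i ∈ s | p ^ e ∣ t i} - 1) := by
  set B := E + 1 + ∑ i ∈ s, t i
  have hB : ∀ i ∈ s, (t i).factorization p < B := fun i hi ↦
    (Nat.factorization_lt p (ht i hi)).trans_le <|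
      (single_le_sum (fun _ _ ↦ Nat.zero_le _) hi).trans (Nat.le_add_left _ _)
  rw [← Nat.factorization_def _ hp, Nat.factorization_prod_div_finset_lcm hp ht hB]
  refine (sum_subset (fun e he ↦ ?_) fun e he he' ↦ ?_).symm
  · simp only [mem_Icc, mem_Ico] at he ⊢
    omega
  · simp only [mem_Icc, mem_Ico, not_and, not_le] at he he'
    exact Nat.sub_eq_zero_of_le (hE e (he' he.1))

theorem card_filter_dvd_add_mul_le_one {q a b n k : ℕ} (hqa : q.Coprime a) (hkq : k < q) :
    #{i ∈ range (k + 1) | q ∣ b + (n + i) * a} ≤ 1 := by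
  refine card_le_one.mpr fun i hi j hj ↦ ?_
  simp only [mem_filter, mem_range] at hi hj
  have hij : b + (n + i) * a ≡ b + (n + j) * a [MOD q] :=
    (Nat.modEq_zero_iff_dvd.mpr hi.2).trans (Nat.modEq_zero_iff_dvd.mpr hj.2).symm
  exact ((hij.add_left_cancel' b).cancel_right_of_coprime hqa |>.add_left_cancel' n)
    |>.eq_of_lt_of_lt (by omega) (by omega)

theorem stmt11_general (k a b : ℕ)
    (p : ℕ) (hp : p.Prime) (hpa : ¬ p ∣ a) (n : ℕ) (hn : 1 ≤ n) :
    padicValNat p ((∏ i ∈ Finset.range (k+1), (b + (n + i) * a)) /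
        (Finset.range (k+1)).lcm (fun i => b + (n + i) * a)) =
      ∑ e ∈ Finset.Icc 1 (Nat.log p k),
        (((Finset.range (k+1)).filter (fun i => p ^ e ∣ b + (n + i) * a)).card - 1) := by
  have ha : a ≠ 0 := by
    rintro rfl
    exact hpa (dvd_zero p)
  refine padicValNat_prod_div_finset_lcm hp (fun i _ ↦ ?_) fun e he ↦ ?_
  · have : 0 < (n + i) * a := Nat.mul_pos (by omega) (Nat.pos_of_ne_zero ha)
    omega
  · exact card_filter_dvd_add_mul_le_one ((hp.coprime_iff_not_dvd.mpr hpa).pow_left e)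
      (Nat.lt_pow_of_log_lt hp.one_lt he)

theorem stmt11 (k a b : ℕ) (hk : 1 ≤ k) (ha : 1 ≤ a) (hab : Nat.gcd a b = 1)
    (p : ℕ) (hp : p.Prime) (hpa : ¬ p ∣ a) (n : ℕ) (hn : 1 ≤ n) :
    padicValNat p ((∏ i ∈ Finset.range (k+1), (b + (n + i) * a)) /
        (Finset.range (k+1)).lcm (fun i => b + (n + i) * a)) =
      ∑ e ∈ Finset.Icc 1 (Nat.log p k),
        (((Finset.range (k+1)).filter (fun i => p ^ e ∣ b + (n + i) * a)).card - 1) :=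
  stmt11_general k a b p hp hpa n hn
end

section
/- Let k ≥ 1, a ≥ 1, b ≥ 0 be integers with gcd(a,b)=1, and let p be a prime with p ∤ a. Then the function n ↦ v_p(g_{k,a,b}(n)) is periodic with period p^{⌊log_p k⌋}: for all positive integers n, v_p(g_{k,a,b}(n + p^{⌊log_p k⌋})) = v_p(g_{k,a,b}(n)). -/
/-!
Write `v` for `padicValNat p`, `L = ⌊log_p k⌋`, `q = p ^ L` and `x_i(n) = b + (n + i) a`. Then
`v (∏ x_i / lcm x_i) = ∑ v (x_i) - max v (x_i)`. Since `p ∤ a`, the terms `x_0, …, x_k` are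
pairwise incongruent modulo `p ^ (L + 1) > k`, so at most one of them has valuation `> L`; hence
`∑ v (x_i) - max v (x_i)` does not change when every valuation is truncated at `L`. The truncated
valuation `min (v x) L` only depends on `x` modulo `p ^ L`, and `x_i(n + q) = x_i(n) + q a`.
-/

open Finset

theorem Finset.sum_sub_sup_eq_sum_min_sub_sup_min {ι : Type*} {s : Finset ι} {f : ι → ℕ} {L : ℕ}
    (h : ∀ i ∈ s, ∀ j ∈ s, L < f i → L < f j → i = j) :
    ∑ i ∈ s, f i - s.sup f = ∑ i ∈ s, min (f i) L - s.sup fun i => min (f i) L := by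
  classical
  by_cases hbig : ∃ i₀ ∈ s, L < f i₀
  · obtain ⟨i₀, hi₀, hL⟩ := hbig
    have hsmall : ∀ i ∈ s.erase i₀, f i ≤ L := fun i hi =>
      not_lt.1 fun hi' => (mem_erase.1 hi).1 (h i (mem_of_mem_erase hi) i₀ hi₀ hi' hL)
    have hsup : s.sup f = f i₀ := by
      refine le_antisymm (Finset.sup_le fun i hi => ?_) (le_sup hi₀)
      by_cases hii₀ : i = i₀
      · rw [hii₀]
      · exact (hsmall i (mem_erase.2 ⟨hii₀, hi⟩)).trans hL.le
    have hsup_min : (s.sup fun i => min (f i) L) = L :=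
      le_antisymm (Finset.sup_le fun _ _ => min_le_right _ _)
        (le_sup_of_le hi₀ (min_eq_right hL.le).ge)
    rw [hsup, hsup_min, ← add_sum_erase s f hi₀, ← add_sum_erase s (fun i => min (f i) L) hi₀,
      min_eq_right hL.le, sum_congr rfl fun i hi => min_eq_left (hsmall i hi),
      Nat.add_sub_cancel_left, Nat.add_sub_cancel_left]
  · push Not at hbig
    have hmin : ∀ i ∈ s, f i = min (f i) L := fun i hi => (min_eq_left (hbig i hi)).symm
    rw [sum_congr rfl hmin, sup_congr rfl hmin]

section Valuation

variable {p : ℕ} [hp : Fact p.Prime]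

theorem padicValNat_prod_div_lcm {ι : Type*} {s : Finset ι} {f : ι → ℕ}
    (hf : ∀ i ∈ s, f i ≠ 0) :
    padicValNat p ((∏ i ∈ s, f i) / s.lcm f) =
      ∑ i ∈ s, padicValNat p (f i) - s.sup fun i => padicValNat p (f i) := by
  have hdvd : s.lcm f ∣ ∏ i ∈ s, f i := Finset.lcm_dvd fun i hi => dvd_prod_of_mem f hi
  simp only [← Nat.factorization_def _ hp.out]
  rw [Nat.factorization_div hdvd, Finsupp.tsub_apply, Nat.factorization_prod_apply hf,
    Finset.factorization_lcm hf]

theorem min_padicValNat_add_of_pow_dvd {x y L : ℕ} (hx : x ≠ 0) (hy : p ^ L ∣ y) :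
    min (padicValNat p (x + y)) L = min (padicValNat p x) L := by
  refine eq_of_forall_le_iff fun j => ?_
  rw [le_min_iff, le_min_iff, ← padicValNat_dvd_iff_le (by omega), ← padicValNat_dvd_iff_le hx]
  exact and_congr_left fun hj => Nat.dvd_add_left ((pow_dvd_pow p hj).trans hy)

end Valuation

theorem eq_of_dvd_progression_of_lt {d a b n i j : ℕ} (hda : d.Coprime a) (hi : i < d)
    (hj : j < d) (hdi : d ∣ b + (n + i) * a) (hdj : d ∣ b + (n + j) * a) : i = j := by
  have hmod : b + (n + i) * a ≡ b + (n + j) * a [MOD d] :=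
    (Nat.modEq_zero_iff_dvd.2 hdi).trans (Nat.modEq_zero_iff_dvd.2 hdj).symm
  exact ((hmod.add_left_cancel' b).cancel_right_of_coprime hda |>.add_left_cancel' n).eq_of_lt_of_lt
    hi hj

theorem eq_of_log_lt_padicValNat_progression {p a b n k i j : ℕ} (hp : p.Prime) (hpa : ¬ p ∣ a)
    (hi : i ≤ k) (hj : j ≤ k) (hvi : Nat.log p k < padicValNat p (b + (n + i) * a))
    (hvj : Nat.log p k < padicValNat p (b + (n + j) * a)) : i = j := by
  have hk : k < p ^ (Nat.log p k + 1) := Nat.lt_pow_succ_log_self hp.one_lt k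
  have hda : (p ^ (Nat.log p k + 1)).Coprime a := ((hp.coprime_iff_not_dvd).2 hpa).pow_left _
  exact eq_of_dvd_progression_of_lt hda (by omega) (by omega)
    ((pow_dvd_pow p hvi).trans pow_padicValNat_dvd) ((pow_dvd_pow p hvj).trans pow_padicValNat_dvd)

theorem stmt12_general (k a b : ℕ)
    (p : ℕ) (hp : p.Prime) (hpa : ¬ p ∣ a) (n : ℕ) (hn : 1 ≤ n) :
    padicValNat p ((∏ i ∈ Finset.range (k+1), (b + (n + p ^ Nat.log p k + i) * a)) /
        (Finset.range (k+1)).lcm (fun i => b + (n + p ^ Nat.log p k + i) * a)) =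
    padicValNat p ((∏ i ∈ Finset.range (k+1), (b + (n + i) * a)) /
        (Finset.range (k+1)).lcm (fun i => b + (n + i) * a)) := by
  have := Fact.mk hp
  have ha : a ≠ 0 := by rintro rfl; exact hpa (dvd_zero p)
  have hterm : ∀ m, 1 ≤ m → ∀ i, b + (m + i) * a ≠ 0 := fun m hm i =>
    (Nat.add_pos_right b (Nat.mul_pos (by omega) (Nat.pos_of_ne_zero ha))).ne'
  have hsingle : ∀ m, ∀ i ∈ range (k + 1), ∀ j ∈ range (k + 1),
      Nat.log p k < padicValNat p (b + (m + i) * a) →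
      Nat.log p k < padicValNat p (b + (m + j) * a) → i = j := fun m i hi j hj =>
    eq_of_log_lt_padicValNat_progression hp hpa (mem_range_succ_iff.1 hi) (mem_range_succ_iff.1 hj)
  have htrunc : ∀ i, min (padicValNat p (b + (n + p ^ Nat.log p k + i) * a)) (Nat.log p k) =
      min (padicValNat p (b + (n + i) * a)) (Nat.log p k) := fun i => by
    rw [show b + (n + p ^ Nat.log p k + i) * a = b + (n + i) * a + p ^ Nat.log p k * a by ring]
    exact min_padicValNat_add_of_pow_dvd (hterm n hn i) (dvd_mul_right _ _)
  rw [padicValNat_prod_div_lcm fun i _ => hterm _ (by omega) i,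
    padicValNat_prod_div_lcm fun i _ => hterm n hn i,
    sum_sub_sup_eq_sum_min_sub_sup_min (hsingle _), sum_sub_sup_eq_sum_min_sub_sup_min (hsingle n)]
  simp only [htrunc]

theorem stmt12 (k a b : ℕ) (hk : 1 ≤ k) (ha : 1 ≤ a) (hab : Nat.gcd a b = 1)
    (p : ℕ) (hp : p.Prime) (hpa : ¬ p ∣ a) (n : ℕ) (hn : 1 ≤ n) :
    padicValNat p ((∏ i ∈ Finset.range (k+1), (b + (n + p ^ Nat.log p k + i) * a)) /
        (Finset.range (k+1)).lcm (fun i => b + (n + p ^ Nat.log p k + i) * a)) =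
    padicValNat p ((∏ i ∈ Finset.range (k+1), (b + (n + i) * a)) /
        (Finset.range (k+1)).lcm (fun i => b + (n + i) * a)) :=
  stmt12_general k a b p hp hpa n hn
end

section
/- There is at most one prime p ≤ k such that v_p(k+1) ≥ ⌊log_p k⌋, for any integer k ≥ 2; i.e., if p and q are primes with p, q ≤ k, v_p(k+1) ≥ ⌊log_p k⌋ and v_q(k+1) ≥ ⌊log_q k⌋, then p = q. -/
/-!
If `p ≠ q` both satisfy the hypothesis, the coprime prime powers `p ^ log_p k` and `q ^ log_q k`
both divide `k + 1`, hence so does their product. Since `k + 1 ≤ p ^ (log_p k + 1)`, this forces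
`q ≤ q ^ log_q k ≤ p`, and symmetrically `p ≤ q`.
-/

namespace Nat

theorem le_of_pow_log_mul_dvd_succ {p k m : ℕ} (hp : 1 < p) (h : p ^ log p k * m ∣ k + 1) :
    m ≤ p := by
  refine le_of_mul_le_mul_left ?_ (pow_pos (zero_lt_one.trans hp) (log p k))
  calc p ^ log p k * m ≤ k + 1 := le_of_dvd k.succ_pos h
    _ ≤ p ^ (log p k + 1) := lt_pow_succ_log_self hp k
    _ = p ^ log p k * p := pow_succ p _

theorem pow_log_dvd_succ {p k : ℕ} (h : log p k ≤ padicValNat p (k + 1)) :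
    p ^ log p k ∣ k + 1 :=
  (pow_dvd_pow p h).trans pow_padicValNat_dvd

theorem le_of_log_le_padicValNat_succ {k p q : ℕ} (hp : p.Prime) (hq : q.Prime) (hne : p ≠ q)
    (hqk : q ≤ k) (h1 : log p k ≤ padicValNat p (k + 1))
    (h2 : log q k ≤ padicValNat q (k + 1)) : q ≤ p := by
  have hcop : Coprime (p ^ log p k) (q ^ log q k) :=
    ((coprime_primes hp hq).mpr hne).pow _ _
  have hpow : q ^ log q k ≤ p :=
    le_of_pow_log_mul_dvd_succ hp.one_lt
      (hcop.mul_dvd_of_dvd_of_dvd (pow_log_dvd_succ h1) (pow_log_dvd_succ h2))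
  exact (le_self_pow (log_pos hq.one_lt hqk).ne' q).trans hpow

end Nat

theorem stmt17_general (k : ℕ) (p q : ℕ) (hp : p.Prime) (hq : q.Prime)
    (hpk : p ≤ k) (hqk : q ≤ k)
    (h1 : Nat.log p k ≤ padicValNat p (k + 1))
    (h2 : Nat.log q k ≤ padicValNat q (k + 1)) : p = q := by
  by_contra hne
  exact hne <| le_antisymm
    (Nat.le_of_log_le_padicValNat_succ hq hp (Ne.symm hne) hpk h2 h1)
    (Nat.le_of_log_le_padicValNat_succ hp hq hne hqk h1 h2)

theorem stmt17 (k : ℕ) (hk : 2 ≤ k) (p q : ℕ) (hp : p.Prime) (hq : q.Prime)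
    (hpk : p ≤ k) (hqk : q ≤ k)
    (h1 : Nat.log p k ≤ padicValNat p (k + 1))
    (h2 : Nat.log q k ≤ padicValNat q (k + 1)) : p = q :=
  stmt17_general k p q hp hq hpk hqk h1 h2
end
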